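/- The number of 5-cycle subgraphs of the Turán graph T_k(n) (with n divisible by k) equals 12·C(k,5)·(n/k)^5 + 24·C(k,4)·C(n/k,2)·(n/k)^3 + 12·C(k,3)·C(n/k,2)^2·(n/k). -/

import Mathlib

/-!
The copies of `C₅` in `G` with a given image form a torsor under `Aut C₅`, the dihedral group of
order 10, so `G` has ten times as many copies of `C₅` as subgraphs isomorphic to `C₅`.

A copy of `C₅` in `K_r(t)` is a proper colouring of the pentagon by parts together with positions
inside the parts. Call a chord `{i, i + 2}` of the pentagon monochromatic if both ends lie in one
part. Two chords `{i, i + 2}` and `{i + 2, i + 4}` cannot both be monochromatic, since the adjacent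
vertices `i + 4` and `i` would then share a part. So there are no monochromatic chords, exactly
one, or two consecutive ones, and the cycle meets 5, 4 or 3 parts. Up to rotation each shape is
parametrized by injections into the parts and into the positions, which gives
`r_(5) t^5 + 5 r_(4) t_(2) t^3 + 5 r_(3) t_(2)^2 t` copies.
-/

open Function SimpleGraph

noncomputable def nuC5 {V : Type*} (G : SimpleGraph V) : ℕ :=
  Nat.card {H : G.Subgraph // Nonempty (H.coe ≃g SimpleGraph.cycleGraph 5)}

theorem Fin.forall_fin_five {P : Fin 5 → Prop} :
    (∀ i, P i) ↔ P 0 ∧ P 1 ∧ P 2 ∧ P 3 ∧ P 4 :=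
  ⟨fun h => ⟨h 0, h 1, h 2, h 3, h 4⟩, fun ⟨h0, h1, h2, h3, h4⟩ i => by
    fin_cases i <;> assumption⟩

namespace SimpleGraph

variable {V W : Type*} {G : SimpleGraph V} {H : SimpleGraph W}

noncomputable def Subgraph.isoEquivCopyFiber (G' : G.Subgraph) :
    (H ≃g G'.coe) ≃ {f : Copy H G // f.toSubgraph = G'} :=
  Equiv.ofBijective (fun e => ⟨G'.coeCopy.comp e.toCopy, by
      simp [Copy.toSubgraph, Subgraph.coeCopy, Copy.comp, Subgraph.map_comp]⟩) <| by
    refine ⟨fun e e' h => RelIso.ext fun a => Subtype.ext ?_, fun ⟨f, hf⟩ => ?_⟩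
    · exact DFunLike.congr_fun (congrArg Subtype.val h) a
    · subst hf
      exact ⟨f.isoToSubgraph, rfl⟩

def Iso.isoCongrRight {W' : Type*} {H' : SimpleGraph W'} (e : H' ≃g H) :
    (H ≃g H') ≃ (H ≃g H) where
  toFun σ := σ.trans e
  invFun σ := σ.trans e.symm
  left_inv σ := by ext; simp
  right_inv σ := by ext; simp

theorem card_copy_eq_card_subgraph_mul_card_aut :
    Nat.card (Copy H G) =
      Nat.card {G' : G.Subgraph // Nonempty (G'.coe ≃g H)} * Nat.card (H ≃g H) := by
  let π : Copy H G → {G' : G.Subgraph // Nonempty (G'.coe ≃g H)} :=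
    fun f => ⟨f.toSubgraph, ⟨f.isoToSubgraph.symm⟩⟩
  have fiber (G' : {G' : G.Subgraph // Nonempty (G'.coe ≃g H)}) :
      {f // π f = G'} ≃ (H ≃g H) :=
    (Equiv.subtypeEquivRight fun f => Subtype.ext_iff).trans <|
      (Subgraph.isoEquivCopyFiber G'.1).symm.trans (Iso.isoCongrRight G'.2.some)
  rw [← Nat.card_prod]
  exact Nat.card_congr <| (Equiv.sigmaFiberEquiv π).symm.trans <|
    (Equiv.sigmaCongrRight fiber).trans (Equiv.sigmaEquivProd _ _)

def Iso.equivSubtype {G' : SimpleGraph W} :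
    (G ≃g G') ≃ {σ : V ≃ W // ∀ a b, G'.Adj (σ a) (σ b) ↔ G.Adj a b} where
  toFun e := ⟨e.toEquiv, fun _ _ => e.map_rel_iff⟩
  invFun σ := ⟨σ.1, σ.2 _ _⟩

theorem card_aut_cycleGraph_five : Nat.card (cycleGraph 5 ≃g cycleGraph 5) = 10 := by
  rw [Nat.card_congr Iso.equivSubtype, Nat.card_eq_fintype_card]
  decide

def Iso.copyCongr {V' : Type*} {G' : SimpleGraph V'} (e : G ≃g G') : Copy H G ≃ Copy H G' where
  toFun f := e.toCopy.comp f
  invFun f := e.symm.toCopy.comp f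
  left_inv f := by ext; simp
  right_inv f := by ext; simp

def cycleGraph.rotate (n : ℕ) (a : Fin (n + 2)) : cycleGraph (n + 2) ≃g cycleGraph (n + 2) :=
  { Equiv.addRight a with map_rel_iff' := by simp [cycleGraph_adj] }

def Copy.ofCycle {n : ℕ} (f : Fin (n + 2) → V) (hf : Injective f)
    (hadj : ∀ i, G.Adj (f i) (f (i + 1))) : Copy (cycleGraph (n + 2)) G :=
  ⟨⟨f, fun {u v} h => by
    rcases cycleGraph_adj.mp h with h | h
    · rw [sub_eq_iff_eq_add'] at h
      exact h ▸ (hadj v).symm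
    · rw [sub_eq_iff_eq_add'] at h
      exact h ▸ hadj u⟩, hf⟩

def Copy.rotate {n : ℕ} (f : Copy (cycleGraph (n + 2)) G) (a : Fin (n + 2)) :
    Copy (cycleGraph (n + 2)) G :=
  f.comp (cycleGraph.rotate n a).toCopy

@[simp] theorem Copy.rotate_apply {n : ℕ} (f : Copy (cycleGraph (n + 2)) G)
    (a i : Fin (n + 2)) : f.rotate a i = f (i + a) := rfl

@[simp] theorem Copy.rotate_rotate_neg {n : ℕ} (f : Copy (cycleGraph (n + 2)) G)
    (a : Fin (n + 2)) : (f.rotate a).rotate (-a) = f := by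
  ext i; simp

@[simp] theorem Copy.rotate_neg_rotate {n : ℕ} (f : Copy (cycleGraph (n + 2)) G)
    (a : Fin (n + 2)) : (f.rotate (-a)).rotate a = f := by
  ext i; simp

theorem Copy.adj_succ {n : ℕ} (f : Copy (cycleGraph (n + 2)) G) (i : Fin (n + 2)) :
    G.Adj (f i) (f (i + 1)) :=
  f.toHom.map_adj (by simp [cycleGraph_adj])

namespace completeEquipartiteGraph

variable {r t : ℕ}

local notation "K" => completeEquipartiteGraph r t
local notation "C₅" => cycleGraph 5

def monochromaticChords (f : Copy C₅ K) : Finset (Fin 5) := {i | (f i).1 = (f (i + 2)).1}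

theorem mem_monochromaticChords {f : Copy C₅ K} {i : Fin 5} :
    i ∈ monochromaticChords f ↔ (f i).1 = (f (i + 2)).1 := by
  simp [monochromaticChords]

theorem fst_ne_fst_succ (f : Copy C₅ K) (i : Fin 5) : (f i).1 ≠ (f (i + 1)).1 :=
  f.adj_succ i

theorem add_two_notMem_monochromaticChords {f : Copy C₅ K} {i : Fin 5}
    (hi : i ∈ monochromaticChords f) : i + 2 ∉ monochromaticChords f := by
  rw [mem_monochromaticChords] at *
  intro h
  apply fst_ne_fst_succ f (i + 2 + 2)
  rw [← h, ← hi, show i + 2 + 2 + 1 = i by simp [add_assoc]]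

theorem monochromaticChords_cases (f : Copy C₅ K) :
    monochromaticChords f = ∅ ∨ (∃ a, monochromaticChords f = {a}) ∨
      ∃ a, monochromaticChords f = {a, a + 1} := by
  have key : ∀ S : Finset (Fin 5), (∀ i ∈ S, i + 2 ∉ S) →
      S = ∅ ∨ (∃ a, S = {a}) ∨ ∃ a, S = {a, a + 1} := by decide
  exact key _ fun _ => add_two_notMem_monochromaticChords

theorem mem_monochromaticChords_rotate {f : Copy C₅ K} {a i : Fin 5} :
    i ∈ monochromaticChords (f.rotate a) ↔ i + a ∈ monochromaticChords f := by
  simp [mem_monochromaticChords, add_right_comm]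

def cycleOnFiveParts (e : Fin 5 ↪ Fin r) (x : Fin 5 → Fin t) : Copy C₅ K :=
  Copy.ofCycle (fun i => (e i, x i)) (fun _ _ h => e.injective (congrArg Prod.fst h))
    fun i => by simp [e.injective.eq_iff]

def cycleOnFourParts (e : Fin 4 ↪ Fin r) (h : Fin 2 ↪ Fin t) (g : Fin 3 → Fin t) :
    Copy C₅ K :=
  Copy.ofCycle ![(e 0, h 0), (e 1, g 0), (e 0, h 1), (e 2, g 1), (e 3, g 2)]
    (by intro i j; fin_cases i <;> fin_cases j <;>
      simp [e.injective.eq_iff, h.injective.eq_iff])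
    (by intro i; fin_cases i <;> simp [e.injective.eq_iff])

def cycleOnThreeParts (e : Fin 3 ↪ Fin r) (h h' : Fin 2 ↪ Fin t) (y : Fin t) : Copy C₅ K :=
  Copy.ofCycle ![(e 0, h 0), (e 1, h' 0), (e 0, h 1), (e 1, h' 1), (e 2, y)]
    (by intro i j; fin_cases i <;> fin_cases j <;>
      simp [e.injective.eq_iff, h.injective.eq_iff, h'.injective.eq_iff])
    (by intro i; fin_cases i <;> simp [e.injective.eq_iff])

theorem cycleOnFiveParts_apply (e : Fin 5 ↪ Fin r) (x : Fin 5 → Fin t) (i : Fin 5) :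
    cycleOnFiveParts e x i = (e i, x i) := rfl

theorem cycleOnFourParts_apply (e : Fin 4 ↪ Fin r) (h : Fin 2 ↪ Fin t) (g : Fin 3 → Fin t)
    (i : Fin 5) :
    cycleOnFourParts e h g i = ![(e 0, h 0), (e 1, g 0), (e 0, h 1), (e 2, g 1), (e 3, g 2)] i :=
  rfl

theorem cycleOnThreeParts_apply (e : Fin 3 ↪ Fin r) (h h' : Fin 2 ↪ Fin t) (y : Fin t)
    (i : Fin 5) :
    cycleOnThreeParts e h h' y i =
      ![(e 0, h 0), (e 1, h' 0), (e 0, h 1), (e 1, h' 1), (e 2, y)] i :=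
  rfl

theorem monochromaticChords_cycleOnFiveParts (e : Fin 5 ↪ Fin r) (x : Fin 5 → Fin t) :
    monochromaticChords (cycleOnFiveParts e x) = ∅ := by
  ext i; fin_cases i <;> simp [mem_monochromaticChords, cycleOnFiveParts_apply, e.injective.eq_iff]

theorem monochromaticChords_cycleOnFourParts (e : Fin 4 ↪ Fin r) (h : Fin 2 ↪ Fin t)
    (g : Fin 3 → Fin t) :
    monochromaticChords (cycleOnFourParts e h g) = {0} := by
  ext i; fin_cases i <;> simp [mem_monochromaticChords, cycleOnFourParts_apply, e.injective.eq_iff]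

theorem monochromaticChords_cycleOnThreeParts (e : Fin 3 ↪ Fin r) (h h' : Fin 2 ↪ Fin t)
    (y : Fin t) :
    monochromaticChords (cycleOnThreeParts e h h' y) = {0, 1} := by
  ext i; fin_cases i <;> simp [mem_monochromaticChords, cycleOnThreeParts_apply, e.injective.eq_iff]

theorem exists_cycleOnFiveParts_eq {f : Copy C₅ K} (hf : monochromaticChords f = ∅) :
    ∃ e x, cycleOnFiveParts e x = f := by
  have chord (i : Fin 5) : (f i).1 ≠ (f (i + 2)).1 := by
    simpa [← mem_monochromaticChords] using Finset.ext_iff.mp hf i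
  have side := fst_ne_fst_succ f
  simp only [Fin.forall_fin_five, Fin.reduceAdd] at chord side
  have hinj : Injective fun i => (f i).1 := by
    intro i j hij
    fin_cases i <;> fin_cases j <;> simp_all [eq_comm]
  exact ⟨⟨_, hinj⟩, fun i => (f i).2, Copy.ext fun i => rfl⟩

theorem exists_cycleOnFourParts_eq {f : Copy C₅ K} (hf : monochromaticChords f = {0}) :
    ∃ e h g, cycleOnFourParts e h g = f := by
  have chord (i : Fin 5) : (f i).1 = (f (i + 2)).1 ↔ i = 0 := by
    simpa [← mem_monochromaticChords] using Finset.ext_iff.mp hf i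
  have side := fst_ne_fst_succ f
  simp only [Fin.forall_fin_five, Fin.reduceAdd, Fin.reduceEq, iff_true, iff_false] at chord side
  have h02 : f 0 ≠ f 2 := f.injective.ne (by decide)
  refine ⟨⟨![(f 0).1, (f 1).1, (f 3).1, (f 4).1], ?_⟩, ⟨![(f 0).2, (f 2).2], ?_⟩,
    ![(f 1).2, (f 3).2, (f 4).2], Copy.ext fun i => ?_⟩
  · intro i j hij
    fin_cases i <;> fin_cases j <;> simp_all [eq_comm]
  · intro i j hij
    fin_cases i <;> fin_cases j <;> simp_all [eq_comm, Prod.ext_iff]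
  · fin_cases i <;> simp [cycleOnFourParts_apply, Prod.ext_iff, chord] <;> rfl

theorem exists_cycleOnThreeParts_eq {f : Copy C₅ K} (hf : monochromaticChords f = {0, 1}) :
    ∃ e h h' y, cycleOnThreeParts e h h' y = f := by
  have chord (i : Fin 5) : (f i).1 = (f (i + 2)).1 ↔ i = 0 ∨ i = 1 := by
    simpa [← mem_monochromaticChords] using Finset.ext_iff.mp hf i
  have side := fst_ne_fst_succ f
  simp only [Fin.forall_fin_five, Fin.reduceAdd, Fin.reduceEq, iff_true, iff_false, or_false,
    false_or] at chord side
  have h02 : f 0 ≠ f 2 := f.injective.ne (by decide)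
  have h13 : f 1 ≠ f 3 := f.injective.ne (by decide)
  refine ⟨⟨![(f 0).1, (f 1).1, (f 4).1], ?_⟩, ⟨![(f 0).2, (f 2).2], ?_⟩,
    ⟨![(f 1).2, (f 3).2], ?_⟩, (f 4).2, Copy.ext fun i => ?_⟩
  · intro i j hij
    fin_cases i <;> fin_cases j <;> simp_all [eq_comm]
  · intro i j hij
    fin_cases i <;> fin_cases j <;> simp_all [eq_comm, Prod.ext_iff]
  · intro i j hij
    fin_cases i <;> fin_cases j <;> simp_all [eq_comm, Prod.ext_iff]
  · fin_cases i <;> simp [cycleOnThreeParts_apply, Prod.ext_iff, chord] <;> rfl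

theorem cycleOnFiveParts_inj {e e' : Fin 5 ↪ Fin r} {x x' : Fin 5 → Fin t} :
    cycleOnFiveParts e x = cycleOnFiveParts e' x' ↔ e = e' ∧ x = x' := by
  refine ⟨fun H => ?_, by rintro ⟨rfl, rfl⟩; rfl⟩
  have := DFunLike.congr_fun H
  simp only [cycleOnFiveParts_apply, Prod.mk.injEq] at this
  exact ⟨DFunLike.ext _ _ fun i => (this i).1, funext fun i => (this i).2⟩

theorem cycleOnFourParts_inj {e e' : Fin 4 ↪ Fin r} {h h' : Fin 2 ↪ Fin t}
    {g g' : Fin 3 → Fin t} :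
    cycleOnFourParts e h g = cycleOnFourParts e' h' g' ↔ e = e' ∧ h = h' ∧ g = g' := by
  refine ⟨fun H => ?_, by rintro ⟨rfl, rfl, rfl⟩; rfl⟩
  have := DFunLike.congr_fun H
  simp only [cycleOnFourParts_apply, Fin.forall_fin_five, Matrix.cons_val, Prod.mk.injEq] at this
  refine ⟨DFunLike.ext _ _ fun i => ?_, DFunLike.ext _ _ fun i => ?_, funext fun i => ?_⟩ <;>
    fin_cases i <;> simp [this]

theorem cycleOnThreeParts_inj {e e' : Fin 3 ↪ Fin r} {h h' k k' : Fin 2 ↪ Fin t}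
    {y y' : Fin t} :
    cycleOnThreeParts e h k y = cycleOnThreeParts e' h' k' y' ↔
      e = e' ∧ h = h' ∧ k = k' ∧ y = y' := by
  refine ⟨fun H => ?_, by rintro ⟨rfl, rfl, rfl, rfl⟩; rfl⟩
  have := DFunLike.congr_fun H
  simp only [cycleOnThreeParts_apply, Fin.forall_fin_five, Matrix.cons_val, Prod.mk.injEq] at this
  refine ⟨DFunLike.ext _ _ fun i => ?_, DFunLike.ext _ _ fun i => ?_,
    DFunLike.ext _ _ fun i => ?_, by simp [this]⟩ <;> fin_cases i <;> simp [this]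

variable (r t) in
/-- The `Fin 5` factors are the rotations taking the monochromatic chords to `{0}`, resp.
`{0, 1}`. -/
abbrev CycleParams : Type :=
  (Fin 5 ↪ Fin r) × (Fin 5 → Fin t) ⊕
    Fin 5 × (Fin 4 ↪ Fin r) × (Fin 2 ↪ Fin t) × (Fin 3 → Fin t) ⊕
    Fin 5 × (Fin 3 ↪ Fin r) × (Fin 2 ↪ Fin t) × (Fin 2 ↪ Fin t) × Fin t

def cycleOfParams : CycleParams r t → Copy C₅ K
  | .inl (e, x) => cycleOnFiveParts e x
  | .inr (.inl (a, e, h, g)) => (cycleOnFourParts e h g).rotate (-a)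
  | .inr (.inr (a, e, h, k, y)) => (cycleOnThreeParts e h k y).rotate (-a)

theorem monochromaticChords_cycleOfParams (p : CycleParams r t) :
    monochromaticChords (cycleOfParams p) =
      Sum.elim (fun _ => ∅) (Sum.elim (fun q => {q.1}) fun q => {q.1, q.1 + 1}) p := by
  rcases p with ⟨e, x⟩ | ⟨a, e, h, g⟩ | ⟨a, e, h, k, y⟩
  · exact monochromaticChords_cycleOnFiveParts e x
  · ext i
    simp [cycleOfParams, mem_monochromaticChords_rotate, monochromaticChords_cycleOnFourParts,
      add_neg_eq_zero]
  · ext i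
    simp [cycleOfParams, mem_monochromaticChords_rotate, monochromaticChords_cycleOnThreeParts,
      add_neg_eq_iff_eq_add, add_comm]

theorem cycleOfParams_injective : Injective (cycleOfParams (r := r) (t := t)) := by
  have singleton_ne_pair : ∀ a b : Fin 5, ({a} : Finset (Fin 5)) ≠ {b, b + 1} := by decide
  have pair_ne_singleton : ∀ a b : Fin 5, ({a, a + 1} : Finset (Fin 5)) ≠ {b} := by decide
  have pair_inj : ∀ a b : Fin 5, ({a, a + 1} : Finset (Fin 5)) = {b, b + 1} ↔ a = b := by decide
  intro p q H
  have shape := monochromaticChords_cycleOfParams p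
  rw [H, monochromaticChords_cycleOfParams] at shape
  rcases p with ⟨e, x⟩ | ⟨a, e, h, g⟩ | ⟨a, e, h, k, y⟩ <;>
    rcases q with ⟨e', x'⟩ | ⟨b, e', h', g'⟩ | ⟨b, e', h', k', y'⟩ <;>
    simp only [Sum.elim_inl, Sum.elim_inr, Finset.singleton_ne_empty, Finset.insert_ne_empty,
      Finset.empty_ne_singleton, (Finset.insert_ne_empty _ _).symm, Finset.singleton_inj,
      singleton_ne_pair, pair_ne_singleton, pair_inj] at shape
  · simpa [cycleOfParams, cycleOnFiveParts_inj] using H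
  · subst b
    simpa [cycleOfParams, cycleOnFourParts_inj] using congrArg (·.rotate a) H
  · subst b
    simpa [cycleOfParams, cycleOnThreeParts_inj] using congrArg (·.rotate a) H

theorem cycleOfParams_surjective : Surjective (cycleOfParams (r := r) (t := t)) := by
  intro f
  rcases monochromaticChords_cases f with hf | ⟨a, hf⟩ | ⟨a, hf⟩
  · obtain ⟨e, x, rfl⟩ := exists_cycleOnFiveParts_eq hf
    exact ⟨.inl (e, x), rfl⟩
  · obtain ⟨e, h, g, hfa⟩ := exists_cycleOnFourParts_eq (f := f.rotate a) (by
      ext i; simp [mem_monochromaticChords_rotate, hf])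
    exact ⟨.inr (.inl (a, e, h, g)), by simp [cycleOfParams, hfa]⟩
  · obtain ⟨e, h, k, y, hfa⟩ := exists_cycleOnThreeParts_eq (f := f.rotate a) (by
      ext i; simp [mem_monochromaticChords_rotate, hf, add_comm])
    exact ⟨.inr (.inr (a, e, h, k, y)), by simp [cycleOfParams, hfa]⟩

theorem card_copy_cycleGraph_five :
    Nat.card (Copy C₅ K) =
      r.descFactorial 5 * t ^ 5 + 5 * r.descFactorial 4 * t.descFactorial 2 * t ^ 3 +
        5 * r.descFactorial 3 * t.descFactorial 2 ^ 2 * t := by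
  rw [← Nat.card_eq_of_bijective _ ⟨cycleOfParams_injective, cycleOfParams_surjective⟩,
    Nat.card_eq_fintype_card]
  simp only [Fintype.card_sum, Fintype.card_prod, Fintype.card_embedding_eq, Fintype.card_fin,
    Fintype.card_pi, Finset.prod_const, Finset.card_univ]
  ring

end completeEquipartiteGraph

end SimpleGraph

/-- The number of 5-cycle subgraphs of the Turán graph `T_k(n)` with `n = k * m`, i.e. the
complete balanced `k`-partite graph with all parts of size `m`. -/
theorem stmt_13 (k m : ℕ) :
    nuC5 (SimpleGraph.completeMultipartiteGraph (fun _ : Fin k => Fin m)) =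
      12 * k.choose 5 * m ^ 5 + 24 * k.choose 4 * m.choose 2 * m ^ 3
        + 12 * k.choose 3 * (m.choose 2) ^ 2 * m := by
  have labelled : nuC5 (completeMultipartiteGraph fun _ : Fin k => Fin m) * 10 =
      Nat.card (Copy (cycleGraph 5) (completeEquipartiteGraph k m)) := by
    rw [Nat.card_congr completeEquipartiteGraph.completeMultipartiteGraph.copyCongr,
      card_copy_eq_card_subgraph_mul_card_aut, card_aut_cycleGraph_five]
    rfl
  rw [completeEquipartiteGraph.card_copy_cycleGraph_five] at labelled
  simp only [Nat.descFactorial_eq_factorial_mul_choose, Nat.factorial] at labelled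
  apply Nat.eq_of_mul_eq_mul_right (by norm_num : 0 < 10)
  rw [labelled]
  ring
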